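/- arXiv:math/0503698 — 2 statements merged into one kernel-verified Lean document; each statement's English description precedes it below -/
import Mathlib

section
/- (No Cycle Lemma) If a directed multigraph D is orderable under a pebble distribution p, then there exists an acyclic subgraph D' of D that is orderable under p and satisfies balance(D',p,v) ≥ balance(D,p,v) for every vertex v. -/
variable {V : Type*} [DecidableEq V]

/-- Result of a pebbling move `u → v`: remove two pebbles from `u`, add one to `v`. -/
def applyMove (p : V → ℕ) (u v : V) (x : V) : ℕ :=
  (if x = u then p x - 2 else p x) + (if x = v then 1 else 0)

/-- A list of moves is a valid sequence of pebbling moves from `p` in `G`. -/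
def IsValidSeq (G : SimpleGraph V) : (V → ℕ) → List (V × V) → Prop
  | _, [] => True
  | p, m :: rest => G.Adj m.1 m.2 ∧ 2 ≤ p m.1 ∧ IsValidSeq G (applyMove p m.1 m.2) rest

/-- The distribution after executing a sequence of pebbling moves. -/
def applySeq (p : V → ℕ) : List (V × V) → V → ℕ
  | [] => p
  | m :: rest => applySeq (applyMove p m.1 m.2) rest

/-- Indegree of a vertex in a directed multigraph (multiset of directed edges). -/
def indeg (D : Multiset (V × V)) (v : V) : ℕ :=
  Multiset.card (D.filter fun e => e.2 = v)

/-- Outdegree of a vertex in a directed multigraph. -/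
def outdeg (D : Multiset (V × V)) (v : V) : ℕ :=
  Multiset.card (D.filter fun e => e.1 = v)

/-- balance(D,p,v) = p(v) + indeg_D(v) - 2·outdeg_D(v). -/
def balance (D : Multiset (V × V)) (p : V → ℕ) (v : V) : ℤ :=
  (p v : ℤ) + (indeg D v : ℤ) - 2 * (outdeg D v : ℤ)

/-- `D` is orderable under `p`: some ordering of the edge multiset of `D`
is a valid sequence of pebbling moves. -/
def Orderable (G : SimpleGraph V) (D : Multiset (V × V)) (p : V → ℕ) : Prop :=
  ∃ σ : List (V × V), (σ : Multiset (V × V)) = D ∧ IsValidSeq G p σ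

/-- A directed multigraph is acyclic if its edge relation admits no directed cycle. -/
def DAcyclic (D : Multiset (V × V)) : Prop :=
  ∀ v : V, ¬ Relation.TransGen (fun a b => (a, b) ∈ D) v v

/-- The strongly connected component of `a` in the directed multigraph `D`. -/
def SCC (D : Multiset (V × V)) (a : V) : Set V :=
  {b | Relation.ReflTransGen (fun x y => (x, y) ∈ D) a b ∧
       Relation.ReflTransGen (fun x y => (x, y) ∈ D) b a}

/-!
Along any valid ordering of `D` the pebble count at `v` is `balance D p v` at the end, so all
balances of `D` are nonnegative. Deleting a directed cycle from `D` costs each of its vertices one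
in-edge and one out-edge, so no balance decreases; deleting cycles one at a time gives an acyclic
`D' ≤ D` with `balance D ≤ balance D'`. Conversely an acyclic multigraph with nonnegative balances
is orderable: a tail `a` without in-edges has `p a ≥ 2 · outdeg a ≥ 2`, so a move out of `a` can
go first, and it leaves the remaining edges with the same (nonnegative) balances.
-/

lemma indeg_cons (e : V × V) (D : Multiset (V × V)) (v : V) :
    indeg (e ::ₘ D) v = indeg D v + if v = e.2 then 1 else 0 := by
  unfold indeg; split_ifs with h <;> simp [h, eq_comm]

lemma outdeg_cons (e : V × V) (D : Multiset (V × V)) (v : V) :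
    outdeg (e ::ₘ D) v = outdeg D v + if v = e.1 then 1 else 0 := by
  unfold outdeg; split_ifs with h <;> simp [h, eq_comm]

lemma balance_cons_of_two_le {p : V → ℕ} {u : V} (hu : 2 ≤ p u) (v : V) (D : Multiset (V × V))
    (w : V) : balance ((u, v) ::ₘ D) p w = balance D (applyMove p u v) w := by
  simp only [balance, indeg_cons, outdeg_cons, applyMove]
  split_ifs <;> subst_vars <;> push_cast [Nat.cast_sub hu] <;> ring

lemma indeg_add (D E : Multiset (V × V)) (v : V) : indeg (D + E) v = indeg D v + indeg E v := by
  simp [indeg, Multiset.filter_add]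

lemma outdeg_add (D E : Multiset (V × V)) (v : V) :
    outdeg (D + E) v = outdeg D v + outdeg E v := by
  simp [outdeg, Multiset.filter_add]

lemma balance_add_le {C : Multiset (V × V)} (hC : ∀ v, indeg C v ≤ 2 * outdeg C v)
    (D : Multiset (V × V)) (p : V → ℕ) (v : V) : balance (C + D) p v ≤ balance D p v := by
  have := hC v
  rw [balance, balance, indeg_add, outdeg_add]
  push_cast
  omega

lemma IsValidSeq.adj {G : SimpleGraph V} {p : V → ℕ} {σ : List (V × V)}
    (h : IsValidSeq G p σ) : ∀ e ∈ σ, G.Adj e.1 e.2 := by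
  induction σ generalizing p with
  | nil => simp
  | cons e σ ih =>
    rintro f (_ | ⟨_, hf⟩)
    exacts [h.1, ih h.2.2 f hf]

lemma IsValidSeq.balance_nonneg {G : SimpleGraph V} {p : V → ℕ} {σ : List (V × V)}
    (h : IsValidSeq G p σ) (v : V) : 0 ≤ balance σ p v := by
  induction σ generalizing p with
  | nil => simp [balance, indeg, outdeg]
  | cons e σ ih =>
    rw [← Multiset.cons_coe, balance_cons_of_two_le h.2.1]
    exact ih h.2.2

theorem Finset.exists_subset_mapsTo_injOn {α : Type*} [DecidableEq α] {f : α → α} {s : Finset α}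
    (hs : s.Nonempty) (hf : Set.MapsTo f s s) :
    ∃ t ⊆ s, t.Nonempty ∧ Set.MapsTo f t t ∧ Set.InjOn f t := by
  induction s using Finset.strongInduction with
  | H s ih =>
    by_cases hinj : Set.InjOn f s
    · exact ⟨s, subset_rfl, hs, hf, hinj⟩
    have himage : s.image f ⊆ s := fun y hy => by
      obtain ⟨x, hx, rfl⟩ := Finset.mem_image.1 hy
      exact hf hx
    have hlt : s.image f ⊂ s := Finset.ssubset_iff_subset_ne.2
      ⟨himage, fun heq => hinj <| Finset.card_image_iff.1 (by rw [heq])⟩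
    obtain ⟨t, hts, ht⟩ := ih _ hlt (hs.image f) fun x hx => Finset.mem_image_of_mem f (himage hx)
    exact ⟨t, hts.trans himage, ht⟩

lemma indeg_le_outdeg_of_injOn {t : Finset V} {g : V → V} (hg : Set.MapsTo g t t)
    (hinj : Set.InjOn g t) (v : V) :
    indeg (t.image fun x => (x, g x)).val v ≤ outdeg (t.image fun x => (x, g x)).val v := by
  have hemb : Function.Injective fun x => (x, g x) := fun x y h => (Prod.ext_iff.1 h).1
  simp only [indeg, outdeg, ← Finset.filter_val, Finset.card_val, Finset.filter_image,
    Finset.card_image_of_injective _ hemb]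
  refine Finset.card_le_card_of_injOn g (fun x hx => ?_) (hinj.mono fun x hx => ?_)
  · simp only [Finset.coe_filter, Set.mem_ofPred_eq] at hx ⊢
    exact ⟨hg hx.1, hx.2⟩
  · exact (Finset.mem_filter.1 hx).1

lemma exists_le_ne_zero_indeg_le_outdeg {D : Multiset (V × V)} (hD : ¬ DAcyclic D) :
    ∃ C ≤ D, C ≠ 0 ∧ ∀ v, indeg C v ≤ outdeg C v := by
  classical
  -- `g` picks a successor on every vertex lying on a cycle; on a minimal `g`-invariant set of such
  -- vertices `g` is injective, and the edges `x → g x` there form a cycle.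
  set R : V → V → Prop := fun a b => (a, b) ∈ D
  have hsucc : ∀ x, Relation.TransGen R x x → ∃ y, R x y ∧ Relation.TransGen R y y := by
    intro x hx
    obtain ⟨y, hxy, hyx⟩ := Relation.TransGen.head'_iff.1 hx
    exact ⟨y, hxy, Relation.TransGen.tail' hyx hxy⟩
  choose! g hg using hsucc
  set s := (D.map Prod.fst).toFinset.filter fun x => Relation.TransGen R x x
  have hmem : ∀ x, Relation.TransGen R x x → x ∈ s := fun x hx =>
    Finset.mem_filter.2 ⟨Multiset.mem_toFinset.2 (Multiset.mem_map.2 ⟨_, (hg x hx).1, rfl⟩), hx⟩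
  have hs : Set.MapsTo g s s := fun x hx => hmem _ (hg x (Finset.mem_filter.1 hx).2).2
  obtain ⟨v, hv⟩ : ∃ v, Relation.TransGen R v v := by simpa [DAcyclic] using hD
  obtain ⟨t, hts, htne, hgt, hinj⟩ := Finset.exists_subset_mapsTo_injOn ⟨v, hmem v hv⟩ hs
  refine ⟨(t.image fun x => (x, g x)).val, ?_,
    fun h => (htne.image _).ne_empty (Finset.val_eq_zero.1 h), indeg_le_outdeg_of_injOn hgt hinj⟩
  refine (Multiset.le_iff_subset (Finset.nodup _)).2 fun e he => ?_
  obtain ⟨x, hx, rfl⟩ := Finset.mem_image.1 he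
  exact (hg x (Finset.mem_filter.1 (hts hx)).2).1

lemma DAcyclic.exists_indeg_eq_zero {D : Multiset (V × V)} (hD : DAcyclic D) (hD0 : D ≠ 0) :
    ∃ e ∈ D, indeg D e.1 = 0 := by
  set R : V → V → Prop := fun a b => (a, b) ∈ D
  have : IsStrictOrder V (Relation.TransGen R) :=
    { irrefl := hD, trans := fun _ _ _ => Relation.TransGen.trans }
  set tails : Set V := ↑(D.map Prod.fst).toFinset
  have hmem {e : V × V} (he : e ∈ D) : e.1 ∈ tails :=
    Multiset.mem_toFinset.2 (Multiset.mem_map_of_mem _ he)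
  obtain ⟨e₀, he₀⟩ := Multiset.exists_mem_of_ne_zero hD0
  obtain ⟨a, ha, hmin⟩ :=
    (Set.wellFoundedOn_iff.1 (tails.toFinite.wellFoundedOn (r := Relation.TransGen R))).has_min
      tails ⟨e₀.1, hmem he₀⟩
  obtain ⟨e, he, rfl⟩ := Multiset.mem_map.1 (Multiset.mem_toFinset.1 ha)
  refine ⟨e, he, Multiset.card_eq_zero.2 (Multiset.filter_eq_nil.2 fun f hf hfe => ?_)⟩
  exact hmin f.1 (hmem hf) ⟨Relation.TransGen.single (hfe ▸ hf), hmem hf, ha⟩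

lemma orderable_of_dAcyclic {G : SimpleGraph V} {D : Multiset (V × V)} {p : V → ℕ}
    (hD : DAcyclic D) (hG : ∀ e ∈ D, G.Adj e.1 e.2) (hp : ∀ v, 0 ≤ balance D p v) :
    Orderable G D p := by
  induction D using Multiset.strongInductionOn generalizing p with
  | ih D ih =>
    rcases eq_or_ne D 0 with rfl | hD0
    · exact ⟨[], rfl, trivial⟩
    obtain ⟨⟨a, b⟩, hab, ha⟩ := hD.exists_indeg_eq_zero hD0
    obtain ⟨E, rfl⟩ := Multiset.exists_cons_of_mem hab
    have hpa : 2 ≤ p a := by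
      have h := hp a
      rw [balance, ha, outdeg_cons, if_pos rfl] at h
      omega
    have hE : DAcyclic E := fun v hv =>
      hD v (Relation.TransGen.mono (fun _ _ h => Multiset.mem_cons_of_mem h) _ _ hv)
    obtain ⟨σ, hσ, hvalid⟩ := ih E (Multiset.lt_cons_self E _) hE
      (fun e he => hG e (Multiset.mem_cons_of_mem he))
      (fun v => balance_cons_of_two_le hpa b E v ▸ hp v)
    exact ⟨(a, b) :: σ, by rw [← hσ]; rfl, hG _ hab, hpa, hvalid⟩

lemma exists_dAcyclic_le_balance_le (D : Multiset (V × V)) (p : V → ℕ) :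
    ∃ D' ≤ D, DAcyclic D' ∧ ∀ v, balance D p v ≤ balance D' p v := by
  induction D using Multiset.strongInductionOn with
  | ih D ih =>
    by_cases hD : DAcyclic D
    · exact ⟨D, le_rfl, hD, fun _ => le_rfl⟩
    obtain ⟨C, hCD, hC0, hC⟩ := exists_le_ne_zero_indeg_le_outdeg hD
    obtain ⟨E, rfl⟩ := Multiset.le_iff_exists_add.1 hCD
    obtain ⟨D', hD', hacyc, hbal⟩ := ih E (lt_add_of_pos_left E (pos_iff_ne_zero.2 hC0))
    exact ⟨D', hD'.trans (Multiset.le_add_left E C), hacyc, fun v =>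
      (balance_add_le (fun v => (hC v).trans (by omega)) E p v).trans (hbal v)⟩

/-- No Cycle Lemma. -/
theorem no_cycle_lemma (G : SimpleGraph V) (D : Multiset (V × V)) (p : V → ℕ)
    (h : Orderable G D p) :
    ∃ D' ≤ D, DAcyclic D' ∧ Orderable G D' p ∧
      ∀ v : V, balance D p v ≤ balance D' p v := by
  obtain ⟨σ, rfl, hσ⟩ := h
  obtain ⟨D', hD', hacyc, hbal⟩ := exists_dAcyclic_le_balance_le (σ : Multiset (V × V)) p
  refine ⟨D', hD', hacyc, orderable_of_dAcyclic hacyc ?_ ?_, hbal⟩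
  · exact fun e he => hσ.adj e (Multiset.mem_of_le hD' he)
  · exact fun v => (hσ.balance_nonneg v).trans (hbal v)
end

section
/- Let R be a set of vertices, k > 0, and let σ be a sequence of pebbling moves placing at least k pebbles on some vertex r ∈ R, of minimum total length among all sequences placing at least k pebbles on some vertex of R. Then in the signature D of σ, every vertex v ∈ R has outdegree strictly less than k/2. -/
variable {V : Type*} [DecidableEq V]

/-! Executing a valid sequence leaves `balance` of its signature on every vertex. Conversely, an
edge multiset with nonnegative balance can be executed greedily: when no move is possible any
more, the pebbles present already dominate the balance. So the signature of a minimum sequence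
has no proper sub-multiset with nonnegative balance that is at least `k` somewhere on `R`. If `v`
lies on a closed walk of the signature, deleting the walk costs every vertex as many in- as
out-edges, so no balance drops. Otherwise, deleting all moves out of vertices reachable from `v`
keeps every in-edge of `v` and raises the balance at `v` by `2 * outdeg v ≥ k`. -/

namespace List

variable {α : Type*} {r : α → α → Prop}

theorem exists_nodup_isChain_cons_of_relationReflTransGen {a b : α}
    (h : Relation.ReflTransGen r a b) :
    ∃ l, IsChain r (a :: l) ∧ (a :: l).getLast (cons_ne_nil _ _) = b ∧ (a :: l).Nodup := by
  induction h using Relation.ReflTransGen.head_induction_on with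
  | refl => exact ⟨[], .singleton _, rfl, nodup_singleton _⟩
  | @head a c hac _ ih =>
    obtain ⟨l, hchain, hlast, hnodup⟩ := ih
    by_cases ha : a ∈ c :: l
    · obtain ⟨s, t, hst⟩ := append_of_mem ha
      rw [hst] at hchain hnodup
      refine ⟨t, hchain.right_of_append, ?_, hnodup.of_append_right⟩
      rw [← hlast, getLast_congr _ (by simp) hst, getLast_append_of_ne_nil]
    · exact ⟨c :: l, hchain.cons_cons hac, by rwa [getLast_cons_cons], nodup_cons.2 ⟨ha, hnodup⟩⟩

theorem rel_of_mem_zip_append_singleton {a b : α} {l : List α} (h : IsChain r (a :: l ++ [b])) :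
    ∀ e ∈ zip (a :: l) (l ++ [b]), r e.1 e.2 := by
  induction l generalizing a with
  | nil => simpa using h
  | cons c l ih =>
    rw [cons_append, cons_append, isChain_cons_cons] at h
    simpa [h.1] using ih h.2

end List

open Multiset

lemma outdeg_eq_count (D : Multiset (V × V)) (x : V) : outdeg D x = (D.map Prod.fst).count x := by
  simp only [outdeg, count_map, eq_comm]

lemma indeg_eq_count (D : Multiset (V × V)) (x : V) : indeg D x = (D.map Prod.snd).count x := by
  simp only [indeg, count_map, eq_comm]

lemma balance_eq_count (D : Multiset (V × V)) (p : V → ℕ) (x : V) :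
    balance D p x = p x + (D.map Prod.snd).count x - 2 * (D.map Prod.fst).count x := by
  rw [balance, indeg_eq_count, outdeg_eq_count]

lemma applyMove_cast {p : V → ℕ} {u : V} (hu : 2 ≤ p u) (w x : V) :
    (applyMove p u w x : ℤ) = p x - 2 * (if x = u then 1 else 0) + (if x = w then 1 else 0) := by
  unfold applyMove
  split_ifs <;> subst_vars <;> push_cast <;> omega

lemma balance_cons {p : V → ℕ} {e : V × V} (he : 2 ≤ p e.1) (D : Multiset (V × V)) (x : V) :
    balance (e ::ₘ D) p x = balance D (applyMove p e.1 e.2) x := by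
  simp only [balance_eq_count, map_cons, count_cons, applyMove_cast he]
  push_cast
  ring

lemma balance_coe_eq_applySeq {G : SimpleGraph V} {p : V → ℕ} {σ : List (V × V)}
    (hσ : IsValidSeq G p σ) (x : V) : balance σ p x = applySeq p σ x := by
  induction σ generalizing p with
  | nil => simp [balance, indeg, outdeg, applySeq]
  | cons e σ ih =>
    rw [← cons_coe, balance_cons hσ.2.1, ih hσ.2.2]
    rfl

lemma adj_of_mem_of_isValidSeq {G : SimpleGraph V} {p : V → ℕ} {σ : List (V × V)}
    (hσ : IsValidSeq G p σ) {e : V × V} (he : e ∈ σ) : G.Adj e.1 e.2 := by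
  induction σ generalizing p with
  | nil => simp at he
  | cons e' σ ih =>
    rcases List.mem_cons.1 he with rfl | he
    · exact hσ.1
    · exact ih hσ.2.2 he

lemma balance_add_le_of_map_fst_eq_map_snd {C : Multiset (V × V)}
    (hC : C.map Prod.fst = C.map Prod.snd) (E : Multiset (V × V)) (p : V → ℕ) (x : V) :
    balance (C + E) p x ≤ balance E p x := by
  simp only [balance_eq_count, Multiset.map_add, count_add, hC]
  push_cast
  omega

/-- Nonnegative balance at a vertex holding at most one pebble forces `indeg ≥ outdeg` there; as
both degree sums equal `card D`, in- and outdegrees agree everywhere. -/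
lemma balance_le_of_forall_lt_two {D : Multiset (V × V)} {p : V → ℕ}
    (hbal : ∀ x, 0 ≤ balance D p x) (hstuck : ∀ e ∈ D, p e.1 < 2) (x : V) :
    balance D p x ≤ p x := by
  have hle : D.map Prod.fst ≤ D.map Prod.snd := by
    refine le_iff_count.2 fun y => ?_
    by_cases hy : y ∈ D.map Prod.fst
    · obtain ⟨e, he, rfl⟩ := mem_map.1 hy
      have hb := hbal e.1
      have hp := hstuck e he
      have hpos := one_le_count_iff_mem.2 hy
      rw [balance_eq_count] at hb
      omega
    · simp [count_eq_zero_of_notMem hy]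
  have heq : D.map Prod.fst = D.map Prod.snd := eq_of_le_of_card_le hle (by simp)
  rw [balance_eq_count, heq]
  omega

theorem exists_isValidSeq_balance_le_applySeq (G : SimpleGraph V) {D : Multiset (V × V)}
    (hD : ∀ e ∈ D, G.Adj e.1 e.2) {p : V → ℕ} (hbal : ∀ x, 0 ≤ balance D p x) :
    ∃ τ, IsValidSeq G p τ ∧ τ.length ≤ card D ∧ ∀ x, balance D p x ≤ applySeq p τ x := by
  induction D using Multiset.strongInductionOn generalizing p with
  | ih D ih =>
  by_cases hmove : ∃ e ∈ D, 2 ≤ p e.1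
  · obtain ⟨e, he, hpe⟩ := hmove
    have hbal' : ∀ x, balance (D.erase e) (applyMove p e.1 e.2) x = balance D p x := by
      intro x
      rw [← balance_cons hpe, cons_erase he]
    obtain ⟨τ, hτ, hlen, hge⟩ := ih (D.erase e) (erase_lt.2 he)
      (fun e' he' => hD e' (mem_of_mem_erase he')) (fun x => (hbal' x).symm ▸ hbal x)
    refine ⟨e :: τ, ⟨hD e he, hpe, hτ⟩, ?_, fun x => hbal' x ▸ hge x⟩
    have := card_erase_add_one he
    simp only [List.length_cons]
    omega
  · push Not at hmove
    exact ⟨[], trivial, Nat.zero_le _, balance_le_of_forall_lt_two hbal hmove⟩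

theorem exists_closedWalk_of_reflTransGen {α : Type*} {D : Multiset (α × α)} {u v : α}
    (huv : (u, v) ∈ D) (hvu : Relation.ReflTransGen (fun a b => (a, b) ∈ D) v u) :
    ∃ C ≤ D, C ≠ 0 ∧ C.map Prod.fst = C.map Prod.snd := by
  obtain ⟨l, hchain, hlast, hnodup⟩ := List.exists_nodup_isChain_cons_of_relationReflTransGen hvu
  have hlen : (v :: l).length = (l ++ [v]).length := by simp
  have hfst : ((v :: l).zip (l ++ [v])).map Prod.fst = v :: l := List.map_fst_zip hlen.le
  have hsnd : ((v :: l).zip (l ++ [v])).map Prod.snd = l ++ [v] := List.map_snd_zip hlen.ge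
  have hwalk : List.IsChain (fun a b => (a, b) ∈ D) (v :: l ++ [v]) := by
    refine hchain.append (.singleton v) fun x hx y hy => ?_
    rw [List.getLast?_eq_some_getLast (List.cons_ne_nil _ _), hlast] at hx
    simp only [Option.mem_def, Option.some.injEq, List.head?_cons] at hx hy
    exact hx ▸ hy ▸ huv
  refine ⟨(v :: l).zip (l ++ [v]), ?_, by simp, ?_⟩
  · rw [le_iff_subset (coe_nodup.2 (List.Nodup.of_map Prod.fst (by rwa [hfst])))]
    exact fun e he => List.rel_of_mem_zip_append_singleton hwalk e he
  · simp only [map_coe, hfst, hsnd, coe_eq_coe]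
    exact (List.perm_append_singleton v l).symm

lemma indeg_filter_of_forall (D : Multiset (V × V)) {P : V × V → Prop} [DecidablePred P] {x : V}
    (h : ∀ e ∈ D, e.2 = x → P e) : indeg (D.filter P) x = indeg D x := by
  rw [indeg, indeg, filter_filter]
  exact congrArg card (filter_congr fun e he => and_iff_left_of_imp (h e he))

lemma outdeg_filter_of_forall (D : Multiset (V × V)) {P : V × V → Prop} [DecidablePred P] {x : V}
    (h : ∀ e ∈ D, e.1 = x → P e) : outdeg (D.filter P) x = outdeg D x := by
  rw [outdeg, outdeg, filter_filter]
  exact congrArg card (filter_congr fun e he => and_iff_left_of_imp (h e he))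

lemma outdeg_filter_eq_zero (D : Multiset (V × V)) {P : V × V → Prop} [DecidablePred P] {x : V}
    (h : ∀ e ∈ D, e.1 = x → ¬P e) : outdeg (D.filter P) x = 0 := by
  rw [outdeg, card_eq_zero, filter_eq_nil]
  intro e he hex
  exact h e (mem_of_mem_filter he) hex (of_mem_filter he)

theorem exists_shorter_of_closedWalk {G : SimpleGraph V} {p : V → ℕ} {σ : List (V × V)}
    (hσ : IsValidSeq G p σ) {C : Multiset (V × V)} (hCσ : C ≤ σ) (hC : C ≠ 0)
    (hCbal : C.map Prod.fst = C.map Prod.snd) :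
    ∃ τ, IsValidSeq G p τ ∧ τ.length < σ.length ∧ ∀ x, applySeq p σ x ≤ applySeq p τ x := by
  obtain ⟨E, hE⟩ := Multiset.le_iff_exists_add.1 hCσ
  have hge : ∀ x, (applySeq p σ x : ℤ) ≤ balance E p x := fun x => by
    rw [← balance_coe_eq_applySeq hσ, hE]
    exact balance_add_le_of_map_fst_eq_map_snd hCbal E p x
  have hEadj : ∀ e ∈ E, G.Adj e.1 e.2 := fun e he =>
    adj_of_mem_of_isValidSeq hσ (mem_coe.1 (hE ▸ mem_add.2 (Or.inr he)))
  obtain ⟨τ, hτ, hlen, hτge⟩ :=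
    exists_isValidSeq_balance_le_applySeq G hEadj fun x => (hge x).trans' (by positivity)
  have hcard : card E < σ.length := by
    rw [← coe_card σ, hE, card_add]
    have := card_pos.2 hC
    omega
  exact ⟨τ, hτ, hlen.trans_lt hcard, fun x => by exact_mod_cast (hge x).trans (hτge x)⟩

theorem exists_shorter_of_forall_not_reflTransGen {G : SimpleGraph V} {p : V → ℕ}
    {σ : List (V × V)} (hσ : IsValidSeq G p σ) {v : V} (hv : 0 < outdeg σ v)
    (hacyc : ∀ e ∈ σ, e.2 = v → ¬Relation.ReflTransGen (fun a b => (a, b) ∈ σ) v e.1) :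
    ∃ τ, IsValidSeq G p τ ∧ τ.length < σ.length ∧
      applySeq p σ v + 2 * outdeg σ v ≤ applySeq p τ v := by
  classical
  set S := {x | Relation.ReflTransGen (fun a b => (a, b) ∈ σ) v x}
  have hS : ∀ e ∈ σ, e.1 ∈ S → e.2 ∈ S := fun e he h1 => h1.tail he
  set D := (σ : Multiset (V × V)).filter fun e => e.1 ∉ S
  have hDout : ∀ x ∈ S, outdeg D x = 0 := fun x hx =>
    outdeg_filter_eq_zero _ fun e _ hex => not_not.2 (hex ▸ hx)
  have hbal : ∀ x, 0 ≤ balance D p x := by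
    intro x
    by_cases hx : x ∈ S
    · rw [balance, hDout x hx]
      omega
    · have hin : indeg D x = indeg σ x :=
        indeg_filter_of_forall _ fun e he hex h1 => hx (hex ▸ hS e he h1)
      have hout : outdeg D x = outdeg σ x := outdeg_filter_of_forall _ fun e _ hex => hex ▸ hx
      rw [balance, hin, hout, ← balance, balance_coe_eq_applySeq hσ]
      positivity
  obtain ⟨τ, hτ, hlen, hτge⟩ := exists_isValidSeq_balance_le_applySeq G
    (fun e he => adj_of_mem_of_isValidSeq hσ (mem_coe.1 (mem_of_mem_filter he))) hbal
  have hcard : card D < σ.length := by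
    obtain ⟨e, he⟩ := card_pos_iff_exists_mem.1 hv
    refine card_lt_card (lt_of_le_of_ne (filter_le _ _) fun hDσ => ?_)
    have := filter_eq_self.1 hDσ e (mem_of_mem_filter he)
    exact this ((of_mem_filter he).symm ▸ Relation.ReflTransGen.refl)
  have hDin : indeg D v = indeg σ v :=
    indeg_filter_of_forall _ fun e he hev h1 => hacyc e he hev h1
  have hbalv : balance D p v = applySeq p σ v + 2 * outdeg σ v := by
    rw [← balance_coe_eq_applySeq hσ, balance, balance, hDin, hDout v .refl]
    ring
  refine ⟨τ, hτ, hlen.trans_lt hcard, ?_⟩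
  exact_mod_cast hbalv ▸ hτge v

/-- In a minimum sequence placing at least `k > 0` pebbles on some vertex of `R`,
every vertex of `R` has outdegree strictly less than `k/2` in the signature. -/
theorem minimum_signatures_target_set (G : SimpleGraph V) (p : V → ℕ) (R : Set V)
    (k : ℕ) (hk : 0 < k) (σ : List (V × V)) (r : V) (hr : r ∈ R)
    (hσ : IsValidSeq G p σ) (hreach : k ≤ applySeq p σ r)
    (hmin : ∀ (τ : List (V × V)) (r' : V), r' ∈ R → IsValidSeq G p τ →
      k ≤ applySeq p τ r' → σ.length ≤ τ.length) :
    ∀ v ∈ R, 2 * outdeg (σ : Multiset (V × V)) v < k := by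
  intro v hv
  by_contra! hout
  by_cases hcyc : ∃ e ∈ σ, e.2 = v ∧ Relation.ReflTransGen (fun a b => (a, b) ∈ σ) v e.1
  · obtain ⟨⟨u, _⟩, he, rfl, hvu⟩ := hcyc
    obtain ⟨C, hCσ, hC, hCbal⟩ := exists_closedWalk_of_reflTransGen (mem_coe.2 he) hvu
    obtain ⟨τ, hτ, hlt, hge⟩ := exists_shorter_of_closedWalk hσ hCσ hC hCbal
    exact (hmin τ r hr hτ (hreach.trans (hge r))).not_gt hlt
  · push Not at hcyc
    obtain ⟨τ, hτ, hlt, hge⟩ := exists_shorter_of_forall_not_reflTransGen hσ (by omega) hcyc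
    exact (hmin τ v hv hτ (by omega)).not_gt hlt
end
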